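/- Assume condition (*). If I' ⊊ I are two M-intervals, then a_{I'}(x) > a_I(x). -/

import Mathlib

open Finset

/-- Interval average `a_{[a:b]}(x) = (x_a + … + x_b)/(b-a+1)`. -/
noncomputable def iavg (x : ℤ → ℝ) (a b : ℤ) : ℝ :=
  (∑ j ∈ Finset.Icc a b, x j) / ((b - a + 1 : ℤ) : ℝ)

/-- Right maximal function `M^r x(i) = sup_{r ≥ 1} a_{[i : i+r−1]}(x)`. -/
noncomputable def Mr (x : ℤ → ℝ) (i : ℤ) : ℝ :=
  sSup {a : ℝ | ∃ r : ℕ, 1 ≤ r ∧ a = iavg x i (i + (r : ℤ) - 1)}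

/-- Condition (*): `x_1, …, x_n` are linearly independent over `ℚ`. -/
def StarCond (n : ℕ) (x : ℤ → ℝ) : Prop :=
  LinearIndependent ℚ (fun i : Fin n => x ((i : ℤ) + 1))

/-- `[i:k]` is a (short) maximal interval: `0 ≤ k − i < n` and
`a_{[i:k]}(x) = M^r x(i)`. -/
def IsMaxInt (n : ℕ) (x : ℤ → ℝ) (i k : ℤ) : Prop :=
  i ≤ k ∧ k - i < (n : ℤ) ∧ iavg x i k = Mr x i

/-- `[i:k]` is an `M`-interval: maximal, and no `[i:k']` with `i ≤ k' < k`
is maximal. -/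
def IsMInt (n : ℕ) (x : ℤ → ℝ) (i k : ℤ) : Prop :=
  IsMaxInt n x i k ∧ ∀ k' : ℤ, i ≤ k' → k' < k → iavg x i k' ≠ Mr x i

/-! The prefix of an `M`-interval `I = [i:k]` that precedes a nested `M`-interval `I' = [i':k']`
is nonempty (otherwise `I'` would be a shorter maximal interval starting at `i`) and is not
maximal, so its average is below `a_I`. Hence the rest `[i':k]` of `I` has average above `a_I`,
and `a_{[i':k]} ≤ M^r x(i') = a_{I'}`. -/

section Averages

variable {x : ℤ → ℝ}

theorem sum_Icc_eq_sum_Icc_add_sum_Icc {i j k : ℤ} (hij : i ≤ j) (hjk : j ≤ k + 1) :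
    ∑ l ∈ Icc i k, x l = ∑ l ∈ Icc i (j - 1), x l + ∑ l ∈ Icc j k, x l := by
  rw [← sum_union (disjoint_left.2 fun l hl hl' => by simp only [mem_Icc] at hl hl'; omega)]
  congr 1
  ext l
  simp only [mem_Icc, mem_union]
  omega

theorem iavg_le_of_forall_le {C : ℝ} (hC : ∀ j, x j ≤ C) {a b : ℤ} (hab : a ≤ b) :
    iavg x a b ≤ C := by
  have hlen : (0 : ℝ) < ((b - a + 1 : ℤ) : ℝ) := by exact_mod_cast (by omega : (0 : ℤ) < b - a + 1)
  rw [iavg, div_le_iff₀ hlen]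
  calc ∑ j ∈ Icc a b, x j ≤ ∑ _j ∈ Icc a b, C := sum_le_sum fun j _ => hC j
    _ = C * ((b - a + 1 : ℤ) : ℝ) := by
      rw [sum_const, Int.card_Icc, nsmul_eq_mul, mul_comm]
      have hcard : ((b + 1 - a).toNat : ℤ) = b - a + 1 := by omega
      rw [← hcard, Int.cast_natCast]

theorem iavg_lt_iavg_of_iavg_lt {i j k : ℤ} (hij : i < j) (hjk : j ≤ k)
    (h : iavg x i (j - 1) < iavg x i k) : iavg x i k < iavg x j k := by
  have hp : (0 : ℝ) < ((j - 1 - i + 1 : ℤ) : ℝ) := by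
    exact_mod_cast (by omega : (0 : ℤ) < j - 1 - i + 1)
  have hq : (0 : ℝ) < ((k - j + 1 : ℤ) : ℝ) := by exact_mod_cast (by omega : (0 : ℤ) < k - j + 1)
  have hlen : ((k - i + 1 : ℤ) : ℝ) = ((j - 1 - i + 1 : ℤ) : ℝ) + ((k - j + 1 : ℤ) : ℝ) := by
    push_cast; ring
  unfold iavg at h ⊢
  rw [sum_Icc_eq_sum_Icc_add_sum_Icc (k := k) hij.le (by omega), hlen] at h ⊢
  rw [div_lt_div_iff₀ hp (by positivity)] at h
  rw [div_lt_div_iff₀ (by positivity) hq]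
  nlinarith

theorem iavg_le_Mr (hx : BddAbove (Set.range x)) {i k : ℤ} (hik : i ≤ k) :
    iavg x i k ≤ Mr x i := by
  obtain ⟨C, hC⟩ := hx
  refine le_csSup ⟨C, ?_⟩ ⟨(k - i + 1).toNat, by omega, by congr 1; omega⟩
  rintro a ⟨r, hr, rfl⟩
  exact iavg_le_of_forall_le (fun j => hC (Set.mem_range_self j)) (by omega)

end Averages

theorem Function.Periodic.bddAbove_range_of_int {α : Type*} [Preorder α] [IsDirectedOrder α]
    [Nonempty α] {x : ℤ → α} {c : ℤ} (hper : Function.Periodic x c) (hc : 0 < c) :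
    BddAbove (Set.range x) :=
  hper.image_Icc hc 0 ▸ ((Set.finite_Icc 0 (0 + c)).image x).bddAbove

section MInterval

variable {n : ℕ} {x : ℤ → ℝ} {i k : ℤ}

theorem IsMInt.iavg_lt (hI : IsMInt n x i k) (hx : BddAbove (Set.range x)) {j : ℤ}
    (hij : i ≤ j) (hjk : j < k) : iavg x i j < iavg x i k :=
  hI.1.2.2 ▸ (iavg_le_Mr hx hij).lt_of_ne (hI.2 j hij hjk)

theorem IsMInt.lt_left_of_ssubset (hI : IsMInt n x i k) {i' k' : ℤ} (hI' : IsMaxInt n x i' k')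
    (hsub : Icc i' k' ⊂ Icc i k) : i < i' := by
  obtain ⟨hii', hk'k⟩ := (Icc_subset_Icc_iff hI'.1).1 hsub.1
  refine hii'.lt_of_ne fun h => ?_
  subst h
  rcases hk'k.lt_or_eq with hk'k | rfl
  · exact hI.2 k' hI'.1 hk'k hI'.2.2
  · exact hsub.ne rfl

end MInterval

theorem MInt_nested_avg_gt_general (n : ℕ) (hn : 1 ≤ n) (x : ℤ → ℝ)
    (hper : ∀ i, x (i + (n : ℤ)) = x i)
    (i k i' k' : ℤ)
    (hI : IsMInt n x i k) (hI' : IsMInt n x i' k')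
    (hsub : Finset.Icc i' k' ⊂ Finset.Icc i k) :
    iavg x i k < iavg x i' k' := by
  have hx : BddAbove (Set.range x) :=
    Function.Periodic.bddAbove_range_of_int hper (by exact_mod_cast hn)
  have hii' : i < i' := hI.lt_left_of_ssubset hI'.1 hsub
  have hi'k : i' ≤ k := hI'.1.1.trans ((Icc_subset_Icc_iff hI'.1.1).1 hsub.1).2
  calc iavg x i k < iavg x i' k :=
        iavg_lt_iavg_of_iavg_lt hii' hi'k (hI.iavg_lt hx (by omega) (by omega))
    _ ≤ Mr x i' := iavg_le_Mr hx hi'k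
    _ = iavg x i' k' := hI'.1.2.2.symm

/-- If `I' ⊊ I` are two `M`-intervals, then `a_{I'}(x) > a_I(x)`. -/
theorem MInt_nested_avg_gt (n : ℕ) (hn : 1 ≤ n) (x : ℤ → ℝ)
    (hpos : ∀ i, 0 ≤ x i) (hper : ∀ i, x (i + (n : ℤ)) = x i)
    (hstar : StarCond n x) (i k i' k' : ℤ)
    (hI : IsMInt n x i k) (hI' : IsMInt n x i' k')
    (hsub : Finset.Icc i' k' ⊂ Finset.Icc i k) :
    iavg x i k < iavg x i' k' :=
  MInt_nested_avg_gt_general n hn x hper i k i' k' hI hI' hsub
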